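/- Suppose c ≠ 0. If the dual multiplier map w(·) is differentiable at x ∈ ℝⁿ, then the index set β(x) = {i : |xᵢ - w(x)μᵢ| = λ} must be empty. -/

import Mathlib

open Finset Filter Topology

/-- Scalar soft-thresholding: `Prox_{λ|·|}(t) = sign(t)·(|t|-λ)₊`. -/
noncomputable def st (lam t : ℝ) : ℝ := Real.sign t * max (|t| - lam) 0

noncomputable def rho (lam a t : ℝ) : ℝ :=
  if |a| < lam then 0 else if lam < |a| then t else if 0 < a then max t 0 else min t 0

lemma rho_cont (lam a : ℝ) : Continuous (rho lam a) := by
  unfold rho; split_ifs <;> fun_prop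

lemma rho_smul (lam a : ℝ) {s : ℝ} (hs : 0 < s) (t : ℝ) :
    rho lam a (s * t) = s * rho lam a t := by
  unfold rho
  split_ifs <;>
    simp [mul_max_of_nonneg _ _ hs.le, mul_min_of_nonneg _ _ hs.le, mul_comm]

lemma st_eq {lam : ℝ} (hlam : 0 < lam) (t : ℝ) :
    st lam t = max (t - lam) 0 + min (t + lam) 0 := by
  rcases lt_trichotomy t 0 with h | h | h
  · rw [st, Real.sign_of_neg h, abs_of_neg h]
    rcases le_or_gt (-t) lam with h2 | h2
    · rw [max_eq_right (by linarith), max_eq_right (by linarith), min_eq_right (by linarith)]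
      ring
    · rw [max_eq_left (by linarith), max_eq_right (by linarith), min_eq_left (by linarith)]
      ring
  · simp [st, h, max_eq_right hlam.le, min_eq_right hlam.le, hlam.le]
  · rw [st, Real.sign_of_pos h, abs_of_pos h, min_eq_right (by linarith)]
    ring

lemma st_add {lam : ℝ} (hlam : 0 < lam) (a : ℝ) :
    ∃ ε > 0, ∀ t : ℝ, |t| < ε → st lam (a + t) = st lam a + rho lam a t := by
  rcases lt_trichotomy a lam with h1 | h1 | h1
  · rcases lt_trichotomy a (-lam) with h2 | h2 | h2
    · -- a < -lam
      refine ⟨-a - lam, by linarith, fun t ht => ?_⟩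
      rw [abs_lt] at ht
      rw [st_eq hlam, st_eq hlam, rho, if_neg (by rw [abs_of_neg (by linarith)]; linarith),
        if_pos (by rw [abs_of_neg (by linarith)]; linarith)]
      rw [max_eq_right (by linarith), max_eq_right (by linarith),
        min_eq_left (by linarith), min_eq_left (by linarith)]
      ring
    · -- a = -lam
      refine ⟨lam, hlam, fun t ht => ?_⟩
      rw [abs_lt] at ht
      subst h2
      rw [st_eq hlam, st_eq hlam, rho, if_neg (by rw [abs_neg, abs_of_pos hlam]; simp),
        if_neg (by rw [abs_neg, abs_of_pos hlam]; simp), if_neg (by linarith)]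
      have e1 : -lam + t + lam = t := by ring
      have e2 : -lam + lam = (0:ℝ) := by ring
      rw [e1, e2, max_eq_right (by linarith), max_eq_right (by linarith), min_self]
      ring
    · -- -lam < a < lam
      have h3 : |a| < lam := abs_lt.mpr ⟨h2, h1⟩
      refine ⟨lam - |a|, by linarith, fun t ht => ?_⟩
      have ha := abs_lt.mp h3
      rw [abs_lt] at ht
      have h4 := abs_le.mp (le_refl |a|)
      rw [st_eq hlam, st_eq hlam, rho, if_pos h3]
      rw [max_eq_right (by cases abs_cases a <;> linarith),
        max_eq_right (by linarith), min_eq_right (by cases abs_cases a <;> linarith),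
        min_eq_right (by linarith)]
      ring
  · -- a = lam
    refine ⟨lam, hlam, fun t ht => ?_⟩
    rw [abs_lt] at ht
    subst h1
    rw [st_eq hlam, st_eq hlam, rho, if_neg (by rw [abs_of_pos hlam]; simp),
      if_neg (by rw [abs_of_pos hlam]; simp), if_pos hlam]
    have e1 : a + t - a = t := by ring
    rw [e1, min_eq_right (by linarith), min_eq_right (by linarith), sub_self, max_self]
    ring
  · -- lam < a
    refine ⟨a - lam, by linarith, fun t ht => ?_⟩
    rw [abs_lt] at ht
    rw [st_eq hlam, st_eq hlam, rho, if_neg (by rw [abs_of_pos (by linarith)]; linarith),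
      if_pos (by rw [abs_of_pos (by linarith)]; linarith)]
    rw [max_eq_left (by linarith), max_eq_left (by linarith),
      min_eq_right (by linarith), min_eq_right (by linarith)]
    ring

noncomputable def sg (lam A : ℝ) : ℝ := if A = lam then 1 else if A = -lam then -1 else 0
noncomputable def tu (lam A : ℝ) : ℝ := if |A| < lam then 0 else if lam < |A| then 2 else 1

lemma tu_nonneg (lam A : ℝ) : 0 ≤ tu lam A := by unfold tu; split_ifs <;> norm_num

lemma tu_of_abs_eq {lam A : ℝ} (h : |A| = lam) : tu lam A = 1 := by
  unfold tu; rw [h]; simp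

lemma tu_of_lt {lam A : ℝ} (h : lam < |A|) : tu lam A = 2 := by
  unfold tu; rw [if_neg (by linarith), if_pos h]

lemma sg_eq_zero {lam A : ℝ} (hlam : 0 < lam) (h : |A| ≠ lam) : sg lam A = 0 := by
  unfold sg
  rw [if_neg, if_neg]
  · intro e; apply h; rw [e, abs_neg, abs_of_pos hlam]
  · intro e; apply h; rw [e, abs_of_pos hlam]

lemma sg_of_abs_eq {lam A : ℝ} (hlam : 0 < lam) (h : |A| = lam) :
    sg lam A = 1 ∨ sg lam A = -1 := by
  rcases (abs_eq hlam.le).mp h with h1 | h1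
  · left; unfold sg; rw [if_pos h1]
  · right; unfold sg
    rw [if_neg (by rw [h1]; intro e; linarith), if_pos h1]

lemma st_zero_of_abs_le {lam A : ℝ} (h : |A| ≤ lam) : st lam A = 0 := by
  unfold st; rw [max_eq_right (by linarith)]; ring

lemma rho_add_neg {lam : ℝ} (hlam : 0 < lam) (A t : ℝ) :
    rho lam A t + rho lam A (-t) = sg lam A * |t| := by
  unfold rho
  rcases lt_trichotomy (|A|) lam with h | h | h
  · rw [if_pos h, if_pos h, sg_eq_zero hlam (ne_of_lt h)]; ring
  · have h1 : ¬ |A| < lam := by rw [h]; exact lt_irrefl lam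
    have h2 : ¬ lam < |A| := by rw [h]; exact lt_irrefl lam
    rw [if_neg h1, if_neg h2, if_neg h1, if_neg h2]
    by_cases hA : 0 < A
    · have hAl : A = lam := by
        rcases (abs_eq hlam.le).mp h with e | e
        · exact e
        · exfalso; rw [e] at hA; linarith
      have hs : sg lam A = 1 := by unfold sg; rw [if_pos hAl]
      rw [if_pos hA, if_pos hA, hs]
      rcases le_total t 0 with h5 | h5
      · rw [max_eq_right h5, max_eq_left (by linarith), abs_of_nonpos h5]; ring
      · rw [max_eq_left h5, max_eq_right (by linarith), abs_of_nonneg h5]; ring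
    · have hAl : A = -lam := by
        rcases (abs_eq hlam.le).mp h with e | e
        · exfalso; rw [e] at hA; exact hA hlam
        · exact e
      have hs : sg lam A = -1 := by
        unfold sg; rw [if_neg (by rw [hAl]; intro e; linarith), if_pos hAl]
      rw [if_neg hA, if_neg hA, hs]
      rcases le_total t 0 with h5 | h5
      · rw [min_eq_left h5, min_eq_right (by linarith), abs_of_nonpos h5]; ring
      · rw [min_eq_right h5, min_eq_left (by linarith), abs_of_nonneg h5]; ring
  · rw [if_neg (by linarith), if_pos h, if_neg (by linarith), if_pos h,
      sg_eq_zero hlam (ne_of_gt h)]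
    ring

lemma rho_sub_neg {lam : ℝ} (hlam : 0 < lam) (A t : ℝ) :
    rho lam A t - rho lam A (-t) = tu lam A * t := by
  unfold rho tu
  rcases lt_trichotomy (|A|) lam with h | h | h
  · rw [if_pos h, if_pos h, if_pos h]; ring
  · have h1 : ¬ |A| < lam := by rw [h]; exact lt_irrefl lam
    have h2 : ¬ lam < |A| := by rw [h]; exact lt_irrefl lam
    rw [if_neg h1, if_neg h2, if_neg h1, if_neg h2, if_neg h1, if_neg h2]
    by_cases hA : 0 < A
    · rw [if_pos hA, if_pos hA]
      rcases le_total t 0 with h5 | h5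
      · rw [max_eq_right h5, max_eq_left (by linarith)]; ring
      · rw [max_eq_left h5, max_eq_right (by linarith)]; ring
    · rw [if_neg hA, if_neg hA]
      rcases le_total t 0 with h5 | h5
      · rw [min_eq_left h5, min_eq_right (by linarith)]; ring
      · rw [min_eq_right h5, min_eq_left (by linarith)]; ring
  · rw [if_neg (by linarith), if_pos h, if_neg (by linarith), if_pos h,
      if_neg (by linarith), if_pos h]
    ring
lemma key {n : ℕ} (μ : Fin n → ℝ) {lam : ℝ} (hlam : 0 < lam) (c : ℝ)
    (w : (Fin n → ℝ) → ℝ)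
    (hw : ∀ y, ∑ i, μ i * st lam (y i - w y * μ i) = c)
    (x : Fin n → ℝ) (hdiff : DifferentiableAt ℝ w x) (d : Fin n → ℝ) :
    ∑ k, μ k * rho lam (x k - w x * μ k) (d k - (fderiv ℝ w x d) * μ k) = 0 := by
  set L : ℝ := fderiv ℝ w x d with hL
  set a : Fin n → ℝ := fun k => x k - w x * μ k with ha
  choose ε hε hst using fun k => st_add hlam (a k)
  have hline : HasDerivAt (fun s : ℝ => x + s • d) d 0 := by
    simpa using ((hasDerivAt_id (0:ℝ)).smul_const d).const_add x
  have hwd : HasDerivAt (fun s : ℝ => w (x + s • d)) L 0 := by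
    have hl : HasFDerivAt w (fderiv ℝ w x) ((fun s : ℝ => x + s • d) 0) := by
      simpa using hdiff.hasFDerivAt
    exact hl.comp_hasDerivAt 0 hline
  set φ : ℝ → ℝ := slope (fun s : ℝ => w (x + s • d)) 0 with hφdef
  have hφ : Tendsto φ (𝓝[≠] (0:ℝ)) (𝓝 L) := hasDerivAt_iff_tendsto_slope.mp hwd
  have hφ' : Tendsto φ (𝓝[>] (0:ℝ)) (𝓝 L) :=
    hφ.mono_left (nhdsWithin_mono 0 (fun s hs => ne_of_gt hs))
  have hφeq : ∀ s : ℝ, s ≠ 0 → s * φ s = w (x + s • d) - w x := by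
    intro s hs
    have h0 : x + (0:ℝ) • d = x := by simp
    simp only [hφdef, slope_def_field, h0, sub_zero]
    rw [mul_comm, div_mul_cancel₀ _ hs]
  have hcw : Tendsto (fun s : ℝ => w (x + s • d)) (𝓝 0) (𝓝 (w x)) := by
    have hc : Continuous (fun s : ℝ => x + s • d) := by fun_prop
    have h2 : Tendsto (fun s : ℝ => x + s • d) (𝓝 0) (𝓝 x) := by
      simpa using hc.tendsto 0
    exact hdiff.continuousAt.tendsto.comp h2
  set h : Fin n → ℝ → ℝ := fun k s => s * d k - (w (x + s • d) - w x) * μ k with hh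
  have htend0 : ∀ k, Tendsto (fun s => h k s) (𝓝 0) (𝓝 0) := by
    intro k
    have h1 : Tendsto (fun s : ℝ => s * d k) (𝓝 0) (𝓝 0) := by
      simpa using (by fun_prop : Continuous (fun s : ℝ => s * d k)).tendsto (0:ℝ)
    have h2 : Tendsto (fun s : ℝ => (w (x + s • d) - w x) * μ k) (𝓝 0) (𝓝 0) := by
      simpa using (hcw.sub_const (w x)).mul_const (μ k)
    simpa using h1.sub h2
  have hev : ∀ᶠ s in 𝓝[>] (0:ℝ), ∀ k, |h k s| < ε k := by
    apply eventually_nhdsWithin_of_eventually_nhds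
    rw [Filter.eventually_all]
    intro k
    have hnb : ∀ᶠ t in 𝓝 (0:ℝ), |t| < ε k := by
      filter_upwards [Metric.ball_mem_nhds (0:ℝ) (hε k)] with t ht
      simpa [Real.dist_eq] using ht
    exact (htend0 k).eventually hnb
  set G : ℝ → ℝ := fun s => ∑ k, μ k * rho lam (a k) (d k - φ s * μ k) with hG
  have hG0 : ∀ᶠ s in 𝓝[>] (0:ℝ), G s = 0 := by
    filter_upwards [hev, self_mem_nhdsWithin] with s hs hspos
    have hsne : s ≠ 0 := ne_of_gt hspos
    have e1 : ∑ k, μ k * st lam (a k + h k s) = c := by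
      rw [← hw (x + s • d)]
      apply Finset.sum_congr rfl
      intro k _
      congr 1
      simp only [hh, ha, Pi.add_apply, Pi.smul_apply, smul_eq_mul]
      ring
    have e2 : ∑ k, μ k * (st lam (a k) + rho lam (a k) (h k s)) = c := by
      rw [← e1]
      exact Finset.sum_congr rfl fun k _ => by rw [hst k (h k s) (hs k)]
    have e3 : ∑ k, μ k * rho lam (a k) (h k s) = 0 := by
      have := hw x
      simp only [mul_add, Finset.sum_add_distrib] at e2
      have hx0 : ∑ k, μ k * st lam (a k) = c := hw x
      linarith [e2, hx0]
    have e4 : ∀ k, h k s = s * (d k - φ s * μ k) := by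
      intro k
      have h5 := hφeq s hsne
      simp only [hh]
      rw [← h5]; ring
    have e5 : s * G s = 0 := by
      rw [hG, Finset.mul_sum, ← e3]
      apply Finset.sum_congr rfl
      intro k _
      rw [e4 k, rho_smul lam (a k) hspos]
      ring
    exact (mul_eq_zero.mp e5).resolve_left hsne
  have hCont : Continuous (fun t : ℝ => ∑ k, μ k * rho lam (a k) (d k - t * μ k)) := by
    apply continuous_finset_sum
    intro k _
    exact continuous_const.mul ((rho_cont lam (a k)).comp (by fun_prop))
  have hGt : Tendsto G (𝓝[>] (0:ℝ)) (𝓝 (∑ k, μ k * rho lam (a k) (d k - L * μ k))) :=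
    (hCont.tendsto L).comp hφ'
  have hGz : Tendsto G (𝓝[>] (0:ℝ)) (𝓝 0) :=
    Tendsto.congr' (by filter_upwards [hG0] with s hs; exact hs.symm) tendsto_const_nhds
  exact tendsto_nhds_unique hGt hGz

/-- With `c ≠ 0`: if the dual multiplier map `w(·)` is differentiable at `x`, then the
index set `β(x) = {i : |xᵢ - w(x)μᵢ| = λ}` is empty. -/
theorem stmt10 (n : ℕ) (μ : Fin n → ℝ) (hμ : ∀ i, μ i ≠ 0)
    (lam : ℝ) (hlam : 0 < lam) (c : ℝ) (hc : c ≠ 0)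
    (w : (Fin n → ℝ) → ℝ)
    (hw : ∀ y : Fin n → ℝ, ∑ i, μ i * st lam (y i - w y * μ i) = c)
    (x : Fin n → ℝ)
    (hdiff : DifferentiableAt ℝ w x) :
    ∀ i, |x i - w x * μ i| ≠ lam := by
  intro i hi
  set a : Fin n → ℝ := fun k => x k - w x * μ k with ha
  set g : Fin n → ℝ := fun p => fderiv ℝ w x (Pi.single p (1:ℝ)) with hgdef
  have hEp : ∀ p, ∑ k, μ k * rho lam (a k) ((Pi.single p 1 : Fin n → ℝ) k - g p * μ k) = 0 := by
    intro p
    have h0 := key μ hlam c w hw x hdiff (Pi.single p (1:ℝ))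
    simp only [ha, hgdef]
    exact h0
  have hEm : ∀ p, ∑ k, μ k * rho lam (a k) (-((Pi.single p 1 : Fin n → ℝ) k - g p * μ k)) = 0 := by
    intro p
    have h0 := key μ hlam c w hw x hdiff (-Pi.single p (1:ℝ))
    have hmap : fderiv ℝ w x (-Pi.single p (1:ℝ)) = -(fderiv ℝ w x (Pi.single p (1:ℝ))) :=
      map_neg _ _
    rw [hmap] at h0
    simp only [ha, hgdef]
    rw [← h0]
    refine Finset.sum_congr rfl fun k _ => ?_
    congr 1
    congr 1
    simp only [Pi.neg_apply]
    ring
  have hstar : ∀ p, ∑ k, μ k * (sg lam (a k) * |(Pi.single p 1 : Fin n → ℝ) k - g p * μ k|) = 0 := by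
    intro p
    have h3 : ∑ k, (μ k * rho lam (a k) ((Pi.single p 1 : Fin n → ℝ) k - g p * μ k)
        + μ k * rho lam (a k) (-((Pi.single p 1 : Fin n → ℝ) k - g p * μ k))) = 0 := by
      rw [Finset.sum_add_distrib, hEp p, hEm p, add_zero]
    rw [← h3]
    refine Finset.sum_congr rfl fun k _ => ?_
    rw [← mul_add, rho_add_neg hlam]
  have hdag : ∀ p, ∑ k, μ k * (tu lam (a k) * ((Pi.single p 1 : Fin n → ℝ) k - g p * μ k)) = 0 := by
    intro p
    have h3 : ∑ k, (μ k * rho lam (a k) ((Pi.single p 1 : Fin n → ℝ) k - g p * μ k)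
        - μ k * rho lam (a k) (-((Pi.single p 1 : Fin n → ℝ) k - g p * μ k))) = 0 := by
      rw [Finset.sum_sub_distrib, hEp p, hEm p, sub_zero]
    rw [← h3]
    refine Finset.sum_congr rfl fun k _ => ?_
    rw [← mul_sub, rho_sub_neg hlam]
  set M : ℝ := ∑ k, tu lam (a k) * μ k ^ 2 with hMdef
  have hgM : ∀ p, μ p * tu lam (a p) = g p * M := by
    intro p
    have h0 := hdag p
    have h1 : ∑ k, (μ k * tu lam (a k) * (Pi.single p 1 : Fin n → ℝ) k - g p * (tu lam (a k) * μ k ^ 2)) = 0 := by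
      rw [← h0]; refine Finset.sum_congr rfl fun k _ => ?_; ring
    rw [Finset.sum_sub_distrib, ← Finset.mul_sum] at h1
    have h2 : ∑ k, μ k * tu lam (a k) * (Pi.single p 1 : Fin n → ℝ) k = μ p * tu lam (a p) := by
      rw [Finset.sum_eq_single p]
      · rw [Pi.single_eq_same, mul_one]
      · intro k _ hk; rw [Pi.single_eq_of_ne hk, mul_zero]
      · intro h; exact absurd (Finset.mem_univ p) h
    rw [h2, ← hMdef] at h1
    linarith [h1]
  have hti : tu lam (a i) = 1 := tu_of_abs_eq hi
  have hμsq : ∀ p : Fin n, 0 < μ p ^ 2 := fun p => by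
    have := mul_self_pos.mpr (hμ p); nlinarith
  have hMpos : 0 < M := by
    have h1 : ∀ k ∈ Finset.univ, 0 ≤ tu lam (a k) * μ k ^ 2 :=
      fun k _ => mul_nonneg (tu_nonneg _ _) (sq_nonneg _)
    have h2 := Finset.single_le_sum h1 (Finset.mem_univ i)
    rw [hti, one_mul, ← hMdef] at h2
    linarith [hμsq i]
  have hα : ∃ p, lam < |a p| := by
    by_contra hcon
    push_neg at hcon
    apply hc
    rw [← hw x]
    apply Finset.sum_eq_zero
    intro k _
    have hz : st lam (x k - w x * μ k) = 0 := st_zero_of_abs_le (hcon k)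
    rw [hz, mul_zero]
  obtain ⟨i0, hi0⟩ := hα
  have hti0 : tu lam (a i0) = 2 := tu_of_lt hi0
  have hsi0 : sg lam (a i0) = 0 := sg_eq_zero hlam (ne_of_gt hi0)
  have hgi0 : g i0 ≠ 0 := by
    intro h0
    have h1 := hgM i0
    rw [h0, zero_mul, hti0] at h1
    exact hμ i0 (by linarith)
  have hT : ∑ k, μ k * (sg lam (a k) * |μ k|) = 0 := by
    have h0 := hstar i0
    have h1 : ∑ k, μ k * (sg lam (a k) * |(Pi.single i0 1 : Fin n → ℝ) k - g i0 * μ k|)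
        = |g i0| * ∑ k, μ k * (sg lam (a k) * |μ k|) := by
      rw [Finset.mul_sum]
      refine Finset.sum_congr rfl fun k _ => ?_
      by_cases hk : k = i0
      · subst hk; rw [hsi0]; ring
      · rw [Pi.single_eq_of_ne hk, zero_sub, abs_neg, abs_mul]; ring
    rw [h1] at h0
    rcases mul_eq_zero.mp h0 with h | h
    · exact absurd (abs_eq_zero.mp h) hgi0
    · exact h
  have hM2 : ∀ p, |x p - w x * μ p| = lam → M = 2 * μ p ^ 2 := by
    intro p hp
    have htp : tu lam (a p) = 1 := tu_of_abs_eq hp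
    have hsp : sg lam (a p) = 1 ∨ sg lam (a p) = -1 := sg_of_abs_eq hlam hp
    have hgp : μ p = g p * M := by
      have h0 := hgM p; rw [htp, mul_one] at h0; exact h0
    have h0 := hstar p
    rw [← Finset.add_sum_erase Finset.univ
      (fun k => μ k * (sg lam (a k) * |(Pi.single p 1 : Fin n → ℝ) k - g p * μ k|))
      (Finset.mem_univ p)] at h0
    have h1 : ∑ k ∈ Finset.univ.erase p, μ k * (sg lam (a k) * |(Pi.single p 1 : Fin n → ℝ) k - g p * μ k|)
        = |g p| * ∑ k ∈ Finset.univ.erase p, μ k * (sg lam (a k) * |μ k|) := by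
      rw [Finset.mul_sum]
      refine Finset.sum_congr rfl fun k hk => ?_
      have hkp : k ≠ p := (Finset.mem_erase.mp hk).1
      rw [Pi.single_eq_of_ne hkp, zero_sub, abs_neg, abs_mul]; ring
    have h2 : ∑ k ∈ Finset.univ.erase p, μ k * (sg lam (a k) * |μ k|)
        = - (μ p * (sg lam (a p) * |μ p|)) := by
      have h3 := Finset.add_sum_erase Finset.univ
        (fun k => μ k * (sg lam (a k) * |μ k|)) (Finset.mem_univ p)
      rw [hT] at h3
      linarith [h3]
    rw [h1, h2, Pi.single_eq_same] at h0
    have habs : |1 - g p * μ p| = |g p| * |μ p| := by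
      rcases hsp with h | h
      · rw [h] at h0
        have hfac : μ p * (|1 - g p * μ p| - |g p| * |μ p|) = 0 := by
          linear_combination h0
        rcases mul_eq_zero.mp hfac with h4 | h4
        · exact absurd h4 (hμ p)
        · linarith [h4]
      · rw [h] at h0
        have hfac : μ p * (|1 - g p * μ p| - |g p| * |μ p|) = 0 := by
          linear_combination -h0
        rcases mul_eq_zero.mp hfac with h4 | h4
        · exact absurd h4 (hμ p)
        · linarith [h4]
    have hrM : (g p * μ p) * M = μ p ^ 2 := by
      linear_combination (-(μ p)) * hgp
    have hrpos : 0 < g p * μ p := by nlinarith [hμsq p, hMpos, hrM]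
    have habs2 : |1 - g p * μ p| = g p * μ p := by
      rw [habs, ← abs_mul, abs_of_pos hrpos]
    have hr : g p * μ p = 1/2 := by
      have h4 := congrArg (fun z : ℝ => z ^ 2) habs2
      simp only [sq_abs] at h4
      linear_combination (-1/2 : ℝ) * h4
    rw [hr] at hrM
    linarith [hrM]
  by_cases hex : ∃ k, k ≠ i ∧ |x k - w x * μ k| = lam
  · obtain ⟨k, hki, hk⟩ := hex
    have hMi := hM2 i hi
    have hMk := hM2 k hk
    have hik : i ≠ i0 := by
      intro e
      rw [← e] at hi0
      simp only [ha] at hi0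
      rw [hi] at hi0
      exact lt_irrefl _ hi0
    have hkk : k ≠ i0 := by
      intro e
      rw [← e] at hi0
      simp only [ha] at hi0
      rw [hk] at hi0
      exact lt_irrefl _ hi0
    have htk : tu lam (a k) = 1 := tu_of_abs_eq hk
    have hnn : ∀ m ∈ Finset.univ, m ∉ ({i, k, i0} : Finset (Fin n)) →
        0 ≤ tu lam (a m) * μ m ^ 2 :=
      fun m _ _ => mul_nonneg (tu_nonneg _ _) (sq_nonneg _)
    have hle := Finset.sum_le_sum_of_subset_of_nonneg
      (Finset.subset_univ ({i, k, i0} : Finset (Fin n))) hnn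
    have hsum3 : ∑ m ∈ ({i, k, i0} : Finset (Fin n)), tu lam (a m) * μ m ^ 2
        = tu lam (a i) * μ i ^ 2 + tu lam (a k) * μ k ^ 2 + tu lam (a i0) * μ i0 ^ 2 := by
      rw [Finset.sum_insert (by
          simp only [Finset.mem_insert, Finset.mem_singleton]
          push_neg
          exact ⟨fun e => hki e.symm, hik⟩),
        Finset.sum_insert (by simpa using hkk), Finset.sum_singleton]
      ring
    rw [hsum3, hti, htk, hti0, ← hMdef] at hle
    have h5 := hμsq i0
    linarith [hle, hMi, hMk]
  · push_neg at hex
    have hTi : ∑ k, μ k * (sg lam (a k) * |μ k|) = μ i * (sg lam (a i) * |μ i|) := by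
      rw [Finset.sum_eq_single i]
      · intro k _ hk
        have hz : sg lam (a k) = 0 := sg_eq_zero hlam (hex k hk)
        rw [hz]; ring
      · intro h; exact absurd (Finset.mem_univ i) h
    rw [hT] at hTi
    have hsi : sg lam (a i) = 1 ∨ sg lam (a i) = -1 := sg_of_abs_eq hlam hi
    rcases hsi with h | h
    · rw [h] at hTi
      rcases mul_eq_zero.mp hTi.symm with h4 | h4
      · exact hμ i h4
      · rw [one_mul] at h4; exact hμ i (abs_eq_zero.mp h4)
    · rw [h] at hTi
      rcases mul_eq_zero.mp hTi.symm with h4 | h4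
      · exact hμ i h4
      · have : |μ i| = 0 := by linarith [h4]
        exact hμ i (abs_eq_zero.mp this)
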